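/- arXiv:2302.05009 — 2 statements merged into one kernel-verified Lean document; each statement's English description precedes it below -/
import Mathlib

section
/- In the disjoint-monitoring-sets inspection game, if b1 ≥ k* and λ_j = 1 for all j ∈ [k*], then for any b2 > k*·c_{k*+1} + Σ_{j=k*+1}^n c_j, any pure attack plan T* with |T* ∩ E_{v_j}| = min(c_j, c_{k*+1}) for every j ∈ [n] is an equilibrium (maximin-optimal) attack strategy, and it has size k*·c_{k*+1} + Σ_{j=k*+1}^n c_j < b2. -/
open Finset

/-- A sensor positioning: each sensor is placed at a node or left unused (`none`). -/
abbrev Pos (n b1 : ℕ) := Fin b1 → Option (Fin n)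

/-- A positioning is valid if no two sensors occupy the same node. -/
def ValidPos {n b1 : ℕ} (s : Pos n b1) : Prop :=
  ∀ j j' : Fin b1, s j = s j' → s j ≠ none → j = j'

/-- The components of the network, grouped by the (mutually disjoint) monitoring
sets `E_{v_i}` of sizes `c i` (0-based indexing: node `i` is `v_{i+1}`). -/
abbrev Component (n : ℕ) (c : Fin n → ℕ) := (i : Fin n) × Fin (c i)

/-- A mixed inspection strategy: a probability distribution over valid positionings. -/
def MixedInsp (n b1 : ℕ) (σ : Pos n b1 → ℝ) : Prop :=
  (∀ s, 0 ≤ σ s) ∧ (∑ s, σ s = 1) ∧ (∀ s, σ s ≠ 0 → ValidPos s)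

/-- A mixed attack strategy with budget `b2`: a distribution over attack plans. -/
def MixedAtk (n b2 : ℕ) (c : Fin n → ℕ) (τ : Finset (Component n c) → ℝ) : Prop :=
  (∀ T, 0 ≤ τ T) ∧ (∑ T, τ T = 1) ∧ (∀ T, τ T ≠ 0 → T.card ≤ b2)

/-- Detection probability of node `i` under the mixed inspection strategy `σ`. -/
noncomputable def detProb {n b1 : ℕ} (lam : Fin b1 → ℝ) (σ : Pos n b1 → ℝ) (i : Fin n) : ℝ :=
  ∑ s, σ s * ∑ j, if s j = some i then lam j else 0

/-- Total attack probability mass placed on monitoring set `i` under `τ`,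
i.e. `Σ_{e ∈ E_{v_i}} p_τ(e)`. -/
noncomputable def atkProb {n : ℕ} {c : Fin n → ℕ} (τ : Finset (Component n c) → ℝ) (i : Fin n) : ℝ :=
  ∑ T, τ T * ((T.filter (fun e => e.1 = i)).card : ℝ)

/-- Expected number of undetected attacks; with mutually disjoint monitoring sets and
independent players' randomizations it equals `Σ_i q_i (1 - p_i)`. -/
noncomputable def U {n b1 : ℕ} (c : Fin n → ℕ) (lam : Fin b1 → ℝ)
    (σ : Pos n b1 → ℝ) (τ : Finset (Component n c) → ℝ) : ℝ :=
  ∑ i, atkProb τ i * (1 - detProb lam σ i)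

/-- `Σ_{j=k+1}^n |E_{v_j}|` (1-based), i.e. sum of sizes with 0-based index `≥ k`. -/
def tailZ (n : ℕ) (c : Fin n → ℕ) (k : ℕ) : ℤ :=
  ∑ j ∈ Finset.univ.filter (fun j : Fin n => k ≤ (j : ℕ)), (c j : ℤ)

/-- `|E_{v_{k+1}}|` (1-based), with the convention `|E_{v_{n+1}}| = 0`. -/
def cext (n : ℕ) (c : Fin n → ℕ) (k : ℕ) : ℤ :=
  if h : k < n then (c ⟨k, h⟩ : ℤ) else 0

/-- `k* = min { k ∈ [n] : b2 - Σ_{j=k+1}^n |E_{v_j}| ≥ k·|E_{v_{k+1}}| }`. -/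
noncomputable def kstar (n b2 : ℕ) (c : Fin n → ℕ) : ℕ :=
  sInf {k | 1 ≤ k ∧ k ≤ n ∧ (k : ℤ) * cext n c k ≤ (b2 : ℤ) - tailZ n c k}

/-- The value formula of Theorem 1:
`b2 - Σ_{i=1}^{b1} λ_i · min(|E_{v_i}|, (1/k*)(b2 - Σ_{j=k*+1}^n |E_{v_j}|))`. -/
noncomputable def valueFormula (n b1 b2 : ℕ) (c : Fin n → ℕ) (lam : Fin b1 → ℝ) : ℝ :=
  (b2 : ℝ) - ∑ j : Fin b1, lam j *
    min ((cext n c (j : ℕ) : ℝ))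
      (((b2 : ℝ) - (tailZ n c (kstar n b2 c) : ℝ)) / (kstar n b2 c))

/-- An equilibrium (maximin-optimal) attack strategy for budget `b2`. -/
def IsEquilAtk (n b1 b2 : ℕ) (c : Fin n → ℕ) (lam : Fin b1 → ℝ)
    (τ : Finset (Component n c) → ℝ) : Prop :=
  MixedAtk n b2 c τ ∧ ∀ τ', MixedAtk n b2 c τ' →
    sInf {x | ∃ σ, MixedInsp n b1 σ ∧ x = U c lam σ τ'} ≤
      sInf {x | ∃ σ, MixedInsp n b1 σ ∧ x = U c lam σ τ}

section Aux

lemma card_filter_lt_fin (N m : ℕ) (hm : m ≤ N) :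
    (univ.filter fun j : Fin N => (j:ℕ) < m).card = m := by
  have h : (univ.filter fun j : Fin N => (j:ℕ) < m).card = (Finset.range m).card :=
    Finset.card_bij' (fun j _ => (j:ℕ)) (fun v hv => ⟨v, lt_of_lt_of_le (mem_range.1 hv) hm⟩)
      (fun a ha => mem_range.2 (by simpa using (mem_filter.1 ha).2))
      (fun v hv => mem_filter.2 ⟨mem_univ _, mem_range.1 hv⟩)
      (fun a ha => rfl) (fun v hv => rfl)
  simpa using h

lemma sum_le_prefix_card (Q : ℕ → ℝ) (hmono : Antitone Q) (I : Finset ℕ) :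
    ∑ i ∈ I, Q i ≤ ∑ j ∈ Finset.range I.card, Q j := by
  induction I using Finset.strongInduction with
  | _ I ih =>
    rcases I.eq_empty_or_nonempty with rfl | hne
    · simp
    · have hMI : I.max' hne ∈ I := I.max'_mem hne
      set M := I.max' hne with hM
      have hIcard : 1 ≤ I.card := Finset.card_pos.2 hne
      have hsub : I ⊆ Finset.range (M + 1) :=
        fun x hx => Finset.mem_range.2 (Nat.lt_succ_of_le (Finset.le_max' I x hx))
      have h1 : I.card - 1 ≤ M := by
        have := Finset.card_le_card hsub
        simp only [Finset.card_range] at this; omega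
      have herase : (I.erase M).card = I.card - 1 := Finset.card_erase_of_mem hMI
      calc ∑ i ∈ I, Q i = ∑ i ∈ I.erase M, Q i + Q M := (Finset.sum_erase_add _ _ hMI).symm
        _ ≤ ∑ j ∈ Finset.range (I.card - 1), Q j + Q (I.card - 1) := by
            refine add_le_add ?_ (hmono h1)
            have := ih (I.erase M) (Finset.erase_ssubset hMI)
            rwa [herase] at this
        _ = ∑ j ∈ Finset.range I.card, Q j := by
            have hcc : I.card - 1 + 1 = I.card := by omega
            rw [← Finset.sum_range_succ, hcc]

lemma sum_le_prefix (Q : ℕ → ℝ) (hmono : Antitone Q) (h0 : ∀ i, 0 ≤ Q i) (I : Finset ℕ)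
    (m : ℕ) (hm : I.card ≤ m) : ∑ i ∈ I, Q i ≤ ∑ j ∈ Finset.range m, Q j :=
  (sum_le_prefix_card Q hmono I).trans
    (Finset.sum_le_sum_of_subset_of_nonneg (Finset.range_subset_range.2 hm) (fun i _ _ => h0 i))

lemma abel_identity (L d : ℕ → ℝ) (N : ℕ) : ∑ j ∈ Finset.range N, L j * d j
    = (∑ j ∈ Finset.range N, (L j - L (j+1)) * (∑ t ∈ Finset.range (j+1), d t))
      + L N * (∑ t ∈ Finset.range N, d t) := by
  induction N with
  | zero => simp
  | succ N ih =>
    rw [Finset.sum_range_succ (fun j => L j * d j), ih,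
      Finset.sum_range_succ (fun j => (L j - L (j+1)) * _),
      Finset.sum_range_succ d]
    ring

lemma abel_compare (L x z : ℕ → ℝ) (N : ℕ) (hL0 : ∀ j, 0 ≤ L j) (hLdec : ∀ j, L (j+1) ≤ L j)
    (hpre : ∀ m, m ≤ N → ∑ j ∈ Finset.range m, x j ≤ ∑ j ∈ Finset.range m, z j) :
    ∑ j ∈ Finset.range N, L j * x j ≤ ∑ j ∈ Finset.range N, L j * z j := by
  rw [abel_identity L x N, abel_identity L z N]
  refine add_le_add (Finset.sum_le_sum fun j hj => ?_)
    (mul_le_mul_of_nonneg_left (hpre N le_rfl) (hL0 N))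
  exact mul_le_mul_of_nonneg_left (hpre (j+1) (Finset.mem_range.1 hj))
    (sub_nonneg.2 (hLdec j))

end Aux

/-- **Proposition 1, first part.** If the defender has at least `k*` perfect
sensors, then for any budget `b2 > k*·c_{k*+1} + Σ_{j>k*} c_j` the pure attack plan `T*`
with `|T* ∩ E_{v_j}| = min(c_j, c_{k*+1})` is an equilibrium attack strategy, of size
`k*·c_{k*+1} + Σ_{j>k*} c_j < b2`. -/
theorem perfect_sensors_pure_attack (n b1 b2 : ℕ) (hn : 1 ≤ n) (hb1n : b1 ≤ n)
    (c : Fin n → ℕ) (hc : Antitone c) (hcpos : ∀ i, 1 ≤ c i)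
    (lam : Fin b1 → ℝ) (hlam : Antitone lam) (hlam01 : ∀ j, 0 < lam j ∧ lam j ≤ 1)
    (hb2 : 1 ≤ b2) (hb2E : b2 ≤ ∑ i, c i)
    (hb1k : kstar n b2 c ≤ b1)
    (hperf : ∀ j : Fin b1, (j : ℕ) < kstar n b2 c → lam j = 1)
    (hbig : (kstar n b2 c : ℤ) * cext n c (kstar n b2 c) + tailZ n c (kstar n b2 c)
      < (b2 : ℤ))
    (Ts : Finset (Component n c))
    (hTs : ∀ j : Fin n, ((Ts.filter (fun e => e.1 = j)).card : ℤ) =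
      min ((c j : ℤ)) (cext n c (kstar n b2 c))) :
    (Ts.card : ℤ) =
        (kstar n b2 c : ℤ) * cext n c (kstar n b2 c) + tailZ n c (kstar n b2 c) ∧
    (Ts.card : ℤ) < (b2 : ℤ) ∧
    IsEquilAtk n b1 b2 c lam (fun T => if T = Ts then (1 : ℝ) else 0) := by
  classical
  set k := kstar n b2 c with hk
  set ce := cext n c k with hce
  have hkn : k ≤ n := le_trans hb1k hb1n
  -- Part 1: cardinality of Ts
  have hfib : Ts.card = ∑ i : Fin n, (Ts.filter fun e => e.1 = i).card :=
    Finset.card_eq_sum_card_fiberwise (fun x _ => Finset.mem_univ _)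
  have hcardZ : (Ts.card : ℤ) = (k : ℤ) * ce + tailZ n c k := by
    have h0 : (Ts.card : ℤ) = ∑ i : Fin n, min ((c i : ℤ)) ce := by
      rw [hfib]
      push_cast
      exact Finset.sum_congr rfl fun i _ => by exact_mod_cast hTs i
    rw [h0, ← Finset.sum_filter_add_sum_filter_not univ (fun i : Fin n => k ≤ (i:ℕ))]
    have h1 : ∑ i ∈ univ.filter (fun i : Fin n => k ≤ (i:ℕ)), min ((c i:ℤ)) ce
        = tailZ n c k := by
      refine Finset.sum_congr rfl fun i hi => ?_
      have hki : k ≤ (i:ℕ) := (Finset.mem_filter.1 hi).2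
      have hklt : k < n := lt_of_le_of_lt hki i.isLt
      have hcek : ce = (c ⟨k, hklt⟩ : ℤ) := by rw [hce, cext, dif_pos hklt]
      rw [hcek, min_eq_left]
      exact_mod_cast hc (show (⟨k, hklt⟩ : Fin n) ≤ i from hki)
    have h2 : ∑ i ∈ univ.filter (fun i : Fin n => ¬ k ≤ (i:ℕ)), min ((c i:ℤ)) ce
        = (k : ℤ) * ce := by
      have hall : ∀ i ∈ univ.filter (fun i : Fin n => ¬ k ≤ (i:ℕ)),
          min ((c i:ℤ)) ce = ce := by
        intro i hi
        have hik : (i:ℕ) < k := by simpa using (Finset.mem_filter.1 hi).2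
        refine min_eq_right ?_
        by_cases hklt : k < n
        · have hcek : ce = (c ⟨k, hklt⟩ : ℤ) := by rw [hce, cext, dif_pos hklt]
          rw [hcek]
          exact_mod_cast hc (show i ≤ (⟨k, hklt⟩ : Fin n) from le_of_lt hik)
        · have : ce = 0 := by rw [hce, cext, dif_neg hklt]
          rw [this]; exact_mod_cast Nat.zero_le _
      rw [Finset.sum_congr rfl hall, Finset.sum_const]
      have hcardf : (univ.filter (fun i : Fin n => ¬ k ≤ (i:ℕ))).card = k := by
        have : (univ.filter (fun i : Fin n => ¬ k ≤ (i:ℕ)))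
            = (univ.filter (fun i : Fin n => (i:ℕ) < k)) := by
          apply Finset.filter_congr; intro i _; simp
        rw [this, card_filter_lt_fin n k hkn]
      rw [hcardf, nsmul_eq_mul]
    rw [h1, h2]; ring
  have hltb2 : (Ts.card : ℤ) < (b2 : ℤ) := by rw [hcardZ]; exact hbig
  refine ⟨hcardZ, hltb2, ?_⟩
  -- Part 3 setup
  set τs : Finset (Component n c) → ℝ := fun T => if T = Ts then (1 : ℝ) else 0 with hτs
  have hTscard : Ts.card ≤ b2 := by
    have : Ts.card < b2 := by exact_mod_cast hltb2
    exact le_of_lt this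
  -- real-valued profiles
  set C : ℕ → ℝ := fun i => if h : i < n then (c ⟨i, h⟩ : ℝ) else 0 with hC
  have hC0 : ∀ i, 0 ≤ C i := by
    intro i; rw [hC]; dsimp only; split
    · positivity
    · exact le_rfl
  have hCanti : Antitone C := by
    intro i j hij
    rw [hC]; dsimp only
    by_cases hj : j < n
    · have hi : i < n := lt_of_le_of_lt hij hj
      rw [dif_pos hi, dif_pos hj]
      exact_mod_cast hc (show (⟨i, hi⟩ : Fin n) ≤ ⟨j, hj⟩ from hij)
    · rw [dif_neg hj]
      split
      · positivity
      · exact le_rfl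
  set cR : ℝ := ((ce : ℤ) : ℝ) with hcR
  have hcRC : cR = C k := by
    rw [hcR, hC]; dsimp only
    by_cases h : k < n
    · rw [dif_pos h, hce, cext, dif_pos h]; push_cast; rfl
    · rw [dif_neg h, hce, cext, dif_neg h]; push_cast; rfl
  set Q : ℕ → ℝ := fun i => min (C i) cR with hQ
  have hQanti : Antitone Q := fun i j hij => min_le_min (hCanti hij) le_rfl
  have hQ0 : ∀ i, 0 ≤ Q i := fun i => le_min (hC0 i) (hcRC ▸ hC0 k)
  have hQge : ∀ i, k ≤ i → Q i = C i := by
    intro i h; rw [hQ]; exact min_eq_left (hcRC ▸ hCanti h)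
  have hQlt : ∀ i, i < k → Q i = cR := by
    intro i h; rw [hQ]; exact min_eq_right (hcRC ▸ hCanti (le_of_lt h))
  set L : ℕ → ℝ := fun j => if h : j < b1 then lam ⟨j, h⟩ else 0 with hL
  have hL0 : ∀ j, 0 ≤ L j := by
    intro j; rw [hL]; dsimp only; split
    · exact le_of_lt (hlam01 _).1
    · exact le_rfl
  have hL1 : ∀ j, L j ≤ 1 := by
    intro j; rw [hL]; dsimp only; split
    · exact (hlam01 _).2
    · exact zero_le_one
  have hLdec : ∀ j, L (j+1) ≤ L j := by
    intro j; rw [hL]; dsimp only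
    by_cases h2 : j + 1 < b1
    · have h1 : j < b1 := by omega
      rw [dif_pos h2, dif_pos h1]
      exact hlam (show (⟨j, h1⟩ : Fin b1) ≤ ⟨j+1, h2⟩ from Nat.le_succ j)
    · rw [dif_neg h2]; split
      · exact le_of_lt (hlam01 _).1
      · exact le_rfl
  have hLk : ∀ j, j < k → L j = 1 := by
    intro j hj
    have hjb : j < b1 := lt_of_lt_of_le hj hb1k
    rw [hL]; dsimp only; rw [dif_pos hjb]
    exact hperf ⟨j, hjb⟩ hj
  have hQval : ∀ i : Fin n, ((Ts.filter fun e => e.1 = i).card : ℝ) = Q ((i:ℕ)) := by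
    intro i
    have h1 : ((Ts.filter fun e => e.1 = i).card : ℝ) = min ((c i : ℝ)) cR := by
      have := hTs i
      rw [hcR]
      exact_mod_cast congrArg (fun z : ℤ => (z : ℝ)) this
    rw [h1, hQ]; dsimp only
    congr 1
    rw [hC]; dsimp only; rw [dif_pos i.isLt]
  -- bound on fiber cards
  have hfilterle : ∀ (T : Finset (Component n c)) (i : Fin n),
      ((T.filter fun e => e.1 = i).card : ℝ) ≤ (c i : ℝ) := by
    intro T i
    have h : (T.filter fun e => e.1 = i).card ≤ (Finset.range (c i)).card := by
      apply Finset.card_le_card_of_injOn (fun e => (e.2 : ℕ))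
      · intro e he
        have h1 : e.1 = i := (Finset.mem_filter.1 he).2
        exact Finset.mem_range.2 (h1 ▸ e.2.isLt)
      · intro e he e' he' hval
        have h1 : e.1 = i := (Finset.mem_filter.1 (Finset.mem_coe.1 he)).2
        have h2 : e'.1 = i := (Finset.mem_filter.1 (Finset.mem_coe.1 he')).2
        rcases e with ⟨i1, x⟩; rcases e' with ⟨i2, y⟩
        dsimp at h1 h2 hval
        subst h1; subst h2
        exact congrArg (Sigma.mk _) (Fin.ext hval)
    rw [Finset.card_range] at h
    exact_mod_cast h
  have hatk0 : ∀ (τ' : Finset (Component n c) → ℝ), (∀ T, 0 ≤ τ' T) →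
      ∀ i : Fin n, 0 ≤ atkProb τ' i := by
    intro τ' h0 i
    refine Finset.sum_nonneg fun T _ => mul_nonneg (h0 T) (Nat.cast_nonneg _)
  have hatk_le : ∀ (τ' : Finset (Component n c) → ℝ), (∀ T, 0 ≤ τ' T) → (∑ T, τ' T = 1) →
      ∀ i : Fin n, atkProb τ' i ≤ (c i : ℝ) := by
    intro τ' h0 h1 i
    calc atkProb τ' i ≤ ∑ T, τ' T * (c i : ℝ) := by
          refine Finset.sum_le_sum fun T _ => ?_
          exact mul_le_mul_of_nonneg_left (hfilterle T i) (h0 T)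
      _ = (c i : ℝ) := by rw [← Finset.sum_mul, h1, one_mul]
  -- detection probability facts
  have hd0 : ∀ (s : Pos n b1) (i : Fin n),
      0 ≤ ∑ j, (if s j = some i then lam j else 0) := by
    intro s i
    refine Finset.sum_nonneg fun j _ => ?_
    split
    · exact le_of_lt (hlam01 j).1
    · exact le_rfl
  have hd_le_one : ∀ (s : Pos n b1), ValidPos s → ∀ i : Fin n,
      (∑ j, if s j = some i then lam j else 0) ≤ 1 := by
    intro s hs i
    rw [← Finset.sum_filter]
    have hF : (univ.filter (fun j : Fin b1 => s j = some i)).card ≤ 1 := by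
      refine Finset.card_le_one.2 fun a ha b hb => ?_
      have ha' : s a = some i := (mem_filter.1 ha).2
      have hb' : s b = some i := (mem_filter.1 hb).2
      exact hs a b (ha'.trans hb'.symm) (by simp [ha'])
    calc ∑ j ∈ univ.filter (fun j : Fin b1 => s j = some i), lam j
        ≤ (univ.filter (fun j : Fin b1 => s j = some i)).card • (1:ℝ) :=
          Finset.sum_le_card_nsmul _ _ 1 (fun j _ => (hlam01 j).2)
      _ ≤ 1 := by
          rw [nsmul_eq_mul, mul_one]
          exact_mod_cast hF
  have hdet_nonneg : ∀ (σ : Pos n b1 → ℝ), MixedInsp n b1 σ → ∀ i, 0 ≤ detProb lam σ i := by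
    intro σ hσ i
    exact Finset.sum_nonneg fun s _ => mul_nonneg (hσ.1 s) (hd0 s i)
  have hdet_le_one : ∀ (σ : Pos n b1 → ℝ), MixedInsp n b1 σ → ∀ i, detProb lam σ i ≤ 1 := by
    intro σ hσ i
    calc detProb lam σ i ≤ ∑ s, σ s * 1 := by
          refine Finset.sum_le_sum fun s _ => ?_
          by_cases h0 : σ s = 0
          · simp [h0]
          · exact mul_le_mul_of_nonneg_left (hd_le_one s (hσ.2.2 s h0) i) (hσ.1 s)
      _ = 1 := by rw [← Finset.sum_mul, hσ.2.1, one_mul]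
  have hU0 : ∀ (σ : Pos n b1 → ℝ) (τ' : Finset (Component n c) → ℝ), MixedInsp n b1 σ →
      (∀ T, 0 ≤ τ' T) → 0 ≤ U c lam σ τ' := by
    intro σ τ' hσ h0
    refine Finset.sum_nonneg fun i _ => mul_nonneg (hatk0 τ' h0 i) ?_
    linarith [hdet_le_one σ hσ i]
  have hBdd : ∀ (τ' : Finset (Component n c) → ℝ), (∀ T, 0 ≤ τ' T) →
      BddBelow {x | ∃ σ, MixedInsp n b1 σ ∧ x = U c lam σ τ'} := by
    intro τ' h0
    refine ⟨0, fun x hx => ?_⟩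
    obtain ⟨σ, hσ, rfl⟩ := hx
    exact hU0 σ τ' hσ h0
  -- the trivial (all-unused) positioning, for nonemptiness
  set snone : Pos n b1 := fun _ => none with hsnone
  set σnone : Pos n b1 → ℝ := fun s => if s = snone then 1 else 0 with hσnone
  have hMInone : MixedInsp n b1 σnone := by
    refine ⟨fun s => ?_, by rw [hσnone]; simp [Finset.sum_ite_eq'], fun s hs => ?_⟩
    · rw [hσnone]; dsimp only; split
      · exact zero_le_one
      · exact le_rfl
    · have hss : s = snone := by
        by_contra hss
        rw [hσnone] at hs; simp [hss] at hs
      subst hss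
      intro j j' _ hne
      exact absurd rfl hne
  have hNe : ∀ (τ' : Finset (Component n c) → ℝ),
      {x | ∃ σ, MixedInsp n b1 σ ∧ x = U c lam σ τ'}.Nonempty :=
    fun τ' => ⟨U c lam σnone τ', σnone, hMInone, rfl⟩
  -- the full identity positioning σ0
  set s0 : Pos n b1 := fun j => some (Fin.castLE hb1n j) with hs0
  set σ0 : Pos n b1 → ℝ := fun s => if s = s0 then 1 else 0 with hσ0
  have hMI0 : MixedInsp n b1 σ0 := by
    refine ⟨fun s => ?_, by rw [hσ0]; simp [Finset.sum_ite_eq'], fun s hs => ?_⟩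
    · rw [hσ0]; dsimp only; split
      · exact zero_le_one
      · exact le_rfl
    · have hss : s = s0 := by
        by_contra hss
        rw [hσ0] at hs; simp [hss] at hs
      subst hss
      intro j j' hjj _
      rw [hs0] at hjj
      simp only [Option.some_inj] at hjj
      exact Fin.castLE_injective hb1n hjj
  have hp0 : ∀ i : Fin n, detProb lam σ0 i = L ((i:ℕ)) := by
    intro i
    have h1 : detProb lam σ0 i = ∑ j, if s0 j = some i then lam j else 0 := by
      unfold detProb
      rw [hσ0]
      rw [Finset.sum_congr rfl (fun s _ => by
        show (if s = s0 then (1:ℝ) else 0) * _ = if s = s0 then (∑ j, if s0 j = some i then lam j else 0) else 0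
        split
        · rename_i hss; rw [hss]; rw [one_mul]
        · rw [zero_mul])]
      rw [Finset.sum_ite_eq' univ s0, if_pos (Finset.mem_univ _)]
    rw [h1, hs0]
    by_cases h : (i:ℕ) < b1
    · have h2 : ∀ j : Fin b1, (some (Fin.castLE hb1n j) = some i) ↔ (j = ⟨(i:ℕ), h⟩) := by
        intro j
        simp only [Option.some_inj]
        constructor
        · intro hh; exact Fin.ext (by simpa using congrArg Fin.val hh)
        · intro hh; subst hh; exact Fin.ext rfl
      rw [Finset.sum_congr rfl (fun j _ => by rw [if_congr (h2 j) rfl rfl])]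
      rw [Finset.sum_ite_eq' univ (⟨(i:ℕ), h⟩ : Fin b1) (fun j => lam j), if_pos (Finset.mem_univ _)]
      rw [hL]; dsimp only; rw [dif_pos h]
    · have h2 : ∀ j : Fin b1, ¬ (some (Fin.castLE hb1n j) = some i) := by
        intro j hj
        simp only [Option.some_inj] at hj
        apply h
        rw [← hj]
        exact j.isLt
      rw [Finset.sum_congr rfl (fun j _ => if_neg (h2 j))]
      rw [Finset.sum_const, smul_zero, hL]
      dsimp only; rw [dif_neg h]
  -- the value lower bound V
  set V : ℝ := ∑ i ∈ Finset.range n, C i * (1 - L i) with hV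
  -- atkProb of the pure attack
  have hqTs : ∀ i : Fin n, atkProb τs i = Q ((i:ℕ)) := by
    intro i
    unfold atkProb
    rw [hτs]
    rw [Finset.sum_congr rfl (fun T _ => by
      show (if T = Ts then (1:ℝ) else 0) * _ = if T = Ts then ((Ts.filter fun e => e.1 = i).card : ℝ) else 0
      split
      · rename_i hTT; rw [hTT, one_mul]
      · rw [zero_mul])]
    rw [Finset.sum_ite_eq' univ Ts, if_pos (Finset.mem_univ _)]
    exact hQval i
  -- τs is a mixed attack strategy
  have hMA : MixedAtk n b2 c τs := by
    refine ⟨fun T => ?_, by rw [hτs]; simp [Finset.sum_ite_eq'], fun T hT => ?_⟩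
    · rw [hτs]; dsimp only; split
      · exact zero_le_one
      · exact le_rfl
    · have : T = Ts := by
        by_contra hTT
        rw [hτs] at hT; simp [hTT] at hT
      subst this
      exact hTscard
  -- pure detection bound (rearrangement via Abel summation)
  have hpure : ∀ s : Pos n b1, ValidPos s →
      (∑ i : Fin n, Q ((i:ℕ)) * (∑ j, if s j = some i then lam j else 0))
        ≤ ∑ j ∈ Finset.range b1, L j * Q j := by
    intro s hs
    set w : Fin b1 → ℝ := fun j => ((s j).map (fun i : Fin n => Q ((i:ℕ)))).getD 0 with hw
    have hswap : (∑ i : Fin n, Q ((i:ℕ)) * ∑ j, if s j = some i then lam j else 0)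
        = ∑ j : Fin b1, lam j * w j := by
      calc (∑ i : Fin n, Q ((i:ℕ)) * ∑ j, if s j = some i then lam j else 0)
          = ∑ i : Fin n, ∑ j : Fin b1, (if s j = some i then Q ((i:ℕ)) * lam j else 0) := by
            refine Finset.sum_congr rfl fun i _ => ?_
            rw [Finset.mul_sum]
            exact Finset.sum_congr rfl fun j _ => by rw [mul_ite, mul_zero]
        _ = ∑ j : Fin b1, ∑ i : Fin n, (if s j = some i then Q ((i:ℕ)) * lam j else 0) :=
            Finset.sum_comm
        _ = ∑ j : Fin b1, lam j * w j := by
            refine Finset.sum_congr rfl fun j _ => ?_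
            cases hsj : s j with
            | none =>
                rw [Finset.sum_congr rfl (fun i _ => if_neg (Ne.symm (Option.some_ne_none i)))]
                rw [Finset.sum_const, smul_zero, hw]
                dsimp only
                rw [hsj]
                simp
            | some i0 =>
                have h2 : ∀ i : Fin n, ((some i0 = some i) ↔ (i = i0)) := by
                  intro i; simp [eq_comm]
                rw [Finset.sum_congr rfl (fun i _ => if_congr (h2 i) rfl rfl)]
                rw [Finset.sum_ite_eq' univ i0 (fun i => Q ((i:ℕ)) * lam j), if_pos (Finset.mem_univ _)]
                rw [hw]; dsimp only; rw [hsj]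
                simp [mul_comm]
    set x : ℕ → ℝ := fun m => if h : m < b1 then w ⟨m, h⟩ else 0 with hx
    have hfin : ∑ j : Fin b1, lam j * w j = ∑ j ∈ Finset.range b1, L j * x j := by
      rw [← Fin.sum_univ_eq_sum_range (fun m => L m * x m) b1]
      refine Finset.sum_congr rfl fun j _ => ?_
      rw [hL, hx]; dsimp only
      rw [dif_pos j.isLt, dif_pos j.isLt]
    rw [hswap, hfin]
    refine abel_compare L x Q b1 hL0 hLdec ?_
    intro m hm
    -- prefix bound
    have hfr : (Finset.range b1).filter (fun j => j < m) = Finset.range m := by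
      ext t; simp only [Finset.mem_filter, Finset.mem_range]; omega
    have hx1 : ∑ j ∈ Finset.range m, x j
        = ∑ j ∈ univ.filter (fun j : Fin b1 => (j:ℕ) < m), w j := by
      rw [← hfr, Finset.sum_filter, ← Fin.sum_univ_eq_sum_range (fun t => if t < m then x t else 0) b1,
        ← Finset.sum_filter]
      refine Finset.sum_congr rfl fun j hj => ?_
      rw [hx]; dsimp only; rw [dif_pos j.isLt]
    set J : Finset (Fin b1) :=
      (univ.filter (fun j : Fin b1 => (j:ℕ) < m)).filter (fun j => s j ≠ none) with hJ
    have hx2 : ∑ j ∈ univ.filter (fun j : Fin b1 => (j:ℕ) < m), w j = ∑ j ∈ J, w j := by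
      rw [hJ]
      refine (Finset.sum_filter_of_ne ?_).symm
      intro j _ hwj hsj
      apply hwj
      rw [hw]; dsimp only; rw [hsj]; rfl
    set i0 : Fin n := ⟨0, hn⟩ with hi0
    set g : Fin b1 → Fin n := fun j => (s j).getD i0 with hg
    have hsome : ∀ j ∈ J, s j = some (g j) := by
      intro j hj
      have h2 : s j ≠ none := (Finset.mem_filter.1 hj).2
      obtain ⟨a, ha⟩ := Option.ne_none_iff_exists'.1 h2
      rw [hg]; dsimp only; rw [ha]; rfl
    have hginj : ∀ j ∈ J, ∀ j' ∈ J, g j = g j' → j = j' := by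
      intro j hj j' hj' hgg
      refine hs j j' ?_ ?_
      · rw [hsome j hj, hsome j' hj', hgg]
      · rw [hsome j hj]; exact Option.some_ne_none _
    have hx3 : ∑ j ∈ J, w j = ∑ i ∈ J.image g, Q ((i:ℕ)) := by
      rw [Finset.sum_image hginj]
      refine Finset.sum_congr rfl fun j hj => ?_
      rw [hw]; dsimp only; rw [hsome j hj]; rfl
    have hx4 : ∑ i ∈ J.image g, Q ((i:ℕ))
        = ∑ t ∈ (J.image g).image (fun i : Fin n => (i:ℕ)), Q t := by
      rw [Finset.sum_image (fun a _ b _ hab => Fin.ext hab)]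
    have hcards : ((J.image g).image (fun i : Fin n => (i:ℕ))).card ≤ m := by
      calc ((J.image g).image (fun i : Fin n => (i:ℕ))).card
          ≤ (J.image g).card := Finset.card_image_le
        _ ≤ J.card := Finset.card_image_le
        _ ≤ (univ.filter (fun j : Fin b1 => (j:ℕ) < m)).card := by
            rw [hJ]; exact Finset.card_le_card (Finset.filter_subset _ _)
        _ = m := card_filter_lt_fin b1 m hm
    rw [hx1, hx2, hx3, hx4]
    exact sum_le_prefix Q hQanti hQ0 _ m hcards
  -- mixed detection bound
  have hkey : ∀ (σ : Pos n b1 → ℝ), MixedInsp n b1 σ →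
      ∑ i : Fin n, Q ((i:ℕ)) * detProb lam σ i ≤ ∑ j ∈ Finset.range b1, L j * Q j := by
    intro σ hσ
    have h1 : ∑ i : Fin n, Q ((i:ℕ)) * detProb lam σ i
        = ∑ s : Pos n b1, σ s * (∑ i : Fin n, Q ((i:ℕ)) * ∑ j, if s j = some i then lam j else 0) := by
      unfold detProb
      calc ∑ i : Fin n, Q ((i:ℕ)) * ∑ s : Pos n b1, σ s * ∑ j, (if s j = some i then lam j else 0)
          = ∑ i : Fin n, ∑ s : Pos n b1, Q ((i:ℕ)) * (σ s * ∑ j, (if s j = some i then lam j else 0)) := by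
            refine Finset.sum_congr rfl fun i _ => Finset.mul_sum _ _ _
        _ = ∑ s : Pos n b1, ∑ i : Fin n, Q ((i:ℕ)) * (σ s * ∑ j, (if s j = some i then lam j else 0)) :=
            Finset.sum_comm
        _ = ∑ s : Pos n b1, σ s * (∑ i : Fin n, Q ((i:ℕ)) * ∑ j, (if s j = some i then lam j else 0)) := by
            refine Finset.sum_congr rfl fun s _ => ?_
            rw [Finset.mul_sum]
            exact Finset.sum_congr rfl fun i _ => by ring
    rw [h1]
    calc ∑ s : Pos n b1, σ s * (∑ i : Fin n, Q ((i:ℕ)) * ∑ j, if s j = some i then lam j else 0)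
        ≤ ∑ s : Pos n b1, σ s * (∑ j ∈ Finset.range b1, L j * Q j) := by
          refine Finset.sum_le_sum fun s _ => ?_
          by_cases h0 : σ s = 0
          · rw [h0, zero_mul, zero_mul]
          · exact mul_le_mul_of_nonneg_left (hpure s (hσ.2.2 s h0)) (hσ.1 s)
      _ = ∑ j ∈ Finset.range b1, L j * Q j := by rw [← Finset.sum_mul, hσ.2.1, one_mul]
  -- Claim 2 : every inspection leaves at least V against the pure attack
  have hclaim2 : ∀ (σ : Pos n b1 → ℝ), MixedInsp n b1 σ → V ≤ U c lam σ τs := by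
    intro σ hσ
    have hUeq : U c lam σ τs
        = (∑ i : Fin n, Q ((i:ℕ))) - ∑ i : Fin n, Q ((i:ℕ)) * detProb lam σ i := by
      unfold U
      rw [← Finset.sum_sub_distrib]
      exact Finset.sum_congr rfl fun i _ => by rw [hqTs i]; ring
    have hGext : ∑ j ∈ Finset.range b1, L j * Q j = ∑ j ∈ Finset.range n, L j * Q j := by
      refine Finset.sum_subset (Finset.range_subset_range.2 hb1n) ?_
      intro j _ hj
      have hjb : ¬ j < b1 := by simpa using hj
      rw [hL]; dsimp only; rw [dif_neg hjb, zero_mul]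
    have hsplit : (∑ i : Fin n, Q ((i:ℕ))) = V + ∑ j ∈ Finset.range n, L j * Q j := by
      rw [Fin.sum_univ_eq_sum_range Q n, hV, ← Finset.sum_add_distrib]
      refine Finset.sum_congr rfl fun i _ => ?_
      by_cases hik : i < k
      · rw [hQlt i hik, hLk i hik]; ring
      · rw [hQge i (le_of_not_gt hik)]; ring
    have h2 := hkey σ hσ
    rw [hGext] at h2
    rw [hUeq]
    linarith [hsplit]
  -- Claim 1 : against σ0 any attack yields at most V
  have hclaim1 : ∀ (τ' : Finset (Component n c) → ℝ), MixedAtk n b2 c τ' →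
      U c lam σ0 τ' ≤ V := by
    intro τ' hτ'
    have h1 : ∀ i : Fin n, atkProb τ' i * (1 - detProb lam σ0 i)
        ≤ C ((i:ℕ)) * (1 - L ((i:ℕ))) := by
      intro i
      rw [hp0 i]
      have hCi : C ((i:ℕ)) = (c i : ℝ) := by
        rw [hC]; dsimp only; rw [dif_pos i.isLt]
      refine mul_le_mul_of_nonneg_right ?_ (by linarith [hL1 ((i:ℕ))])
      rw [hCi]
      exact hatk_le τ' hτ'.1 hτ'.2.1 i
    calc U c lam σ0 τ' ≤ ∑ i : Fin n, C ((i:ℕ)) * (1 - L ((i:ℕ))) := Finset.sum_le_sum fun i _ => h1 i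
      _ = V := by rw [hV, ← Fin.sum_univ_eq_sum_range (fun m => C m * (1 - L m)) n]
  -- conclude
  refine ⟨hMA, fun τ' hτ' => ?_⟩
  have hle1 : sInf {x | ∃ σ, MixedInsp n b1 σ ∧ x = U c lam σ τ'} ≤ U c lam σ0 τ' :=
    csInf_le (hBdd τ' hτ'.1) ⟨σ0, hMI0, rfl⟩
  have hle2 : V ≤ sInf {x | ∃ σ, MixedInsp n b1 σ ∧ x = U c lam σ τs} := by
    refine le_csInf (hNe τs) ?_
    rintro x ⟨σ, hσ, rfl⟩
    exact hclaim2 σ hσ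
  exact hle1.trans ((hclaim1 τ' hτ').trans hle2)
end

section
/- In the disjoint-monitoring-sets inspection game, the value of the game is nonincreasing in each sensor accuracy λ_i and, for fixed accuracies and monitoring-set sizes, the value b2 - Σ_{i=1}^{b1} λ_i · min( c_i , (1/k*)(b2 - Σ_{j=k*+1}^n c_j) ) is nonnegative and at most b2. -/
open Finset

lemma cext_nonneg (n : ℕ) (c : Fin n → ℕ) (m : ℕ) : (0:ℤ) ≤ cext n c m := by
  unfold cext; split <;> positivity

lemma tailZ_eq (n : ℕ) (c : Fin n → ℕ) (k : ℕ) (hk : k ≤ n) :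
    tailZ n c k = ∑ m ∈ Finset.Ico k n, cext n c m := by
  unfold tailZ
  rw [Finset.sum_filter]
  have h0 : ∑ j : Fin n, (if k ≤ (j:ℕ) then (c j : ℤ) else 0)
      = ∑ j : Fin n, (if k ≤ (j:ℕ) then cext n c (j:ℕ) else 0) := by
    apply Finset.sum_congr rfl
    intro j _
    simp only [cext, j.2, dif_pos, Fin.eta]
  have h0' : ∑ j : Fin n, (if k ≤ (j:ℕ) then cext n c (j:ℕ) else 0)
      = ∑ m ∈ Finset.range n, (if k ≤ m then cext n c m else 0) :=
    Fin.sum_univ_eq_sum_range (fun m => if k ≤ m then cext n c m else 0) n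
  rw [h0, h0']
  rw [Finset.range_eq_Ico, ← Finset.sum_Ico_consecutive _ (Nat.zero_le k) hk]
  have h2 : ∑ m ∈ Finset.Ico 0 k, (if k ≤ m then cext n c m else 0) = 0 := by
    apply Finset.sum_eq_zero
    intro m hm
    simp only [Finset.mem_Ico] at hm
    rw [if_neg (by omega)]
  have h3 : ∑ m ∈ Finset.Ico k n, (if k ≤ m then cext n c m else 0)
      = ∑ m ∈ Finset.Ico k n, cext n c m := by
    apply Finset.sum_congr rfl
    intro m hm
    simp only [Finset.mem_Ico] at hm
    rw [if_pos hm.1]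
  rw [h2, h3, zero_add]

lemma kstar_mem (n b2 : ℕ) (hn : 1 ≤ n) (c : Fin n → ℕ) :
    1 ≤ kstar n b2 c ∧ kstar n b2 c ≤ n ∧
    (kstar n b2 c : ℤ) * cext n c (kstar n b2 c) ≤ (b2 : ℤ) - tailZ n c (kstar n b2 c) := by
  have hne : n ∈ {k | 1 ≤ k ∧ k ≤ n ∧ (k : ℤ) * cext n c k ≤ (b2 : ℤ) - tailZ n c k} := by
    refine ⟨hn, le_refl n, ?_⟩
    have h1 : cext n c n = 0 := by unfold cext; rw [dif_neg (lt_irrefl n)]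
    have h2 : tailZ n c n = 0 := by
      rw [tailZ_eq n c n (le_refl n), Finset.Ico_self, Finset.sum_empty]
    rw [h1, h2]; simp
  exact Nat.sInf_mem ⟨n, hne⟩

/-- The value of the game is nonincreasing in each sensor accuracy, and
for valid accuracies it lies in `[0, b2]`. -/
theorem value_monotone_and_bounded (n b1 b2 : ℕ) (hn : 1 ≤ n) (hb1n : b1 ≤ n)
    (c : Fin n → ℕ) (hc : Antitone c) (hcpos : ∀ i, 1 ≤ c i)
    (hb2 : 1 ≤ b2) (hb2E : b2 ≤ ∑ i, c i) :
    (∀ lam lam' : Fin b1 → ℝ,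
      (Antitone lam ∧ ∀ j, 0 < lam j ∧ lam j ≤ 1) →
      (Antitone lam' ∧ ∀ j, 0 < lam' j ∧ lam' j ≤ 1) →
      (∀ j, lam j ≤ lam' j) →
      valueFormula n b1 b2 c lam' ≤ valueFormula n b1 b2 c lam) ∧
    (∀ lam : Fin b1 → ℝ, (Antitone lam ∧ ∀ j, 0 < lam j ∧ lam j ≤ 1) →
      0 ≤ valueFormula n b1 b2 c lam ∧ valueFormula n b1 b2 c lam ≤ (b2 : ℝ)) := by
  set k := kstar n b2 c with hkdef
  obtain ⟨hk1, hkn, hkineq⟩ := kstar_mem n b2 hn c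
  set Q : ℝ := ((b2 : ℝ) - (tailZ n c k : ℝ)) / (k : ℝ) with hQdef
  have hkpos : (0:ℝ) < (k:ℝ) := by exact_mod_cast hk1
  have htail : (0:ℤ) ≤ (b2 : ℤ) - tailZ n c k := by
    have := mul_nonneg (by exact_mod_cast (Nat.zero_le k) : (0:ℤ) ≤ (k:ℤ)) (cext_nonneg n c k)
    linarith
  have hQ0 : 0 ≤ Q := by
    apply div_nonneg _ hkpos.le
    have : (0:ℝ) ≤ ((b2 : ℤ) - tailZ n c k : ℤ) := by exact_mod_cast htail
    push_cast at this; linarith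
  have hmin0 : ∀ m : ℕ, 0 ≤ min ((cext n c m : ℝ)) Q := by
    intro m
    exact le_min (by exact_mod_cast cext_nonneg n c m) hQ0
  -- key sum bound
  have hsum : ∑ j : Fin b1, min ((cext n c (j:ℕ) : ℝ)) Q ≤ (b2 : ℝ) := by
    have hext : ∑ j : Fin b1, min ((cext n c (j:ℕ) : ℝ)) Q
        ≤ ∑ m ∈ Finset.range n, min ((cext n c m : ℝ)) Q := by
      rw [Fin.sum_univ_eq_sum_range (fun m => min ((cext n c m : ℝ)) Q)]
      exact Finset.sum_le_sum_of_subset_of_nonneg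
        (Finset.range_subset_range.2 hb1n) (fun m _ _ => hmin0 m)
    refine hext.trans ?_
    rw [Finset.range_eq_Ico, ← Finset.sum_Ico_consecutive _ (Nat.zero_le k) hkn]
    have h1 : ∑ m ∈ Finset.Ico 0 k, min ((cext n c m : ℝ)) Q
        ≤ ∑ m ∈ Finset.Ico 0 k, Q :=
      Finset.sum_le_sum (fun m _ => min_le_right _ _)
    have h2 : ∑ m ∈ Finset.Ico k n, min ((cext n c m : ℝ)) Q
        ≤ ∑ m ∈ Finset.Ico k n, (cext n c m : ℝ) :=
      Finset.sum_le_sum (fun m _ => min_le_left _ _)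
    have h3 : ∑ m ∈ Finset.Ico 0 k, Q = (k : ℝ) * Q := by
      rw [Finset.sum_const, Nat.card_Ico, Nat.sub_zero, nsmul_eq_mul]
    have h4 : (k : ℝ) * Q = (b2 : ℝ) - (tailZ n c k : ℝ) := by
      rw [hQdef, mul_div_cancel₀ _ hkpos.ne']
    have h5 : ∑ m ∈ Finset.Ico k n, (cext n c m : ℝ) = (tailZ n c k : ℝ) := by
      rw [tailZ_eq n c k hkn]; push_cast; rfl
    calc ∑ m ∈ Finset.Ico 0 k, min ((cext n c m : ℝ)) Q
          + ∑ m ∈ Finset.Ico k n, min ((cext n c m : ℝ)) Q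
        ≤ (k : ℝ) * Q + (tailZ n c k : ℝ) := by rw [← h3, ← h5]; exact add_le_add h1 h2
      _ = (b2 : ℝ) := by rw [h4]; ring
  constructor
  · intro lam lam' hlam hlam' hle
    unfold valueFormula
    apply sub_le_sub_left
    exact Finset.sum_le_sum (fun j _ =>
      mul_le_mul_of_nonneg_right (hle j) (hmin0 (j : ℕ)))
  · intro lam ⟨_, hlam⟩
    unfold valueFormula
    constructor
    · rw [sub_nonneg]
      calc ∑ j : Fin b1, lam j * min ((cext n c (j:ℕ) : ℝ)) Q
          ≤ ∑ j : Fin b1, min ((cext n c (j:ℕ) : ℝ)) Q :=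
            Finset.sum_le_sum (fun j _ => by
              nlinarith [(hlam j).2, hmin0 (j:ℕ), (hlam j).1])
        _ ≤ (b2 : ℝ) := hsum
    · have : 0 ≤ ∑ j : Fin b1, lam j * min ((cext n c (j:ℕ) : ℝ)) Q :=
        Finset.sum_nonneg (fun j _ => mul_nonneg (hlam j).1.le (hmin0 (j:ℕ)))
      linarith
end
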